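/- For natural numbers m > n ≥ 2, the Grassmannian angles satisfy α_{m+1,n+1} < α_{m,n} (strict inequality), and consequently α_{m,n+1} < α_{m,n}. -/

import Mathlib

open scoped RealInnerProductSpace
abbrev E (n : ℕ) := EuclideanSpace ℝ (Fin n)
noncomputable def coh {n : ℕ} (X : Set (E n)) : ℝ :=
  sSup {r : ℝ | ∃ x ∈ X, ∃ y ∈ X, x ≠ y ∧ r = |⟪x, y⟫|}
def IsUnitSet {n : ℕ} (X : Set (E n)) : Prop := ∀ x ∈ X, ‖x‖ = 1
def Isolated {n : ℕ} (X : Set (E n)) (x : E n) : Prop :=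
  ∀ y ∈ X, y ≠ x → |⟪x, y⟫| < coh X
def Isolable {n : ℕ} (X : Set (E n)) (x : E n) : Prop :=
  ∀ ε > 0, ∃ x' : E n, ‖x'‖ = 1 ∧ ‖x - x'‖ < ε ∧ ∀ y ∈ X, y ≠ x → |⟪x', y⟫| < coh X
def Grassmannian {n : ℕ} (m : ℕ) (X : Set (E n)) : Prop :=
  IsUnitSet X ∧ X.Finite ∧ X.ncard = m ∧
    ∀ Y : Set (E n), IsUnitSet Y → Y.Finite → Y.ncard = m → coh X ≤ coh Y
noncomputable def grassAngle (m n : ℕ) : ℝ :=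
  sInf {r : ℝ | ∃ X : Set (E n), IsUnitSet X ∧ X.Finite ∧ X.ncard = m ∧ coh X = r}

/-!
More than `n` unit vectors in `ℝⁿ` are linearly dependent, so by a Gershgorin-type argument their
coherence `β` is at least `1/m`. Lift them to `ℝⁿ⁺¹` as `yᵢ = (√(1 - uᵢ²) xᵢ, uᵢ)` with
`uᵢ = c^(i+1)` and `c = 1/(4m)`. Tilting lowers `|⟪yᵢ, yⱼ⟫|` by about `β uᵢ² / 2 ≥ 2c uᵢ²`, while
the new term `uᵢ uⱼ` (for `i < j`) is at most `c uᵢ²`, so every inner product drops by at least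
`δ = c^(2m+1)`. The new direction `(0, 1)` has inner products `uᵢ ≤ c` with the `yᵢ`, so it can
be added too. Because `δ` depends only on `m`, the drop survives passing to the infimum, without
knowing whether that infimum is attained.
-/

open Finset in
lemma linearIndependent_of_abs_inner_le {ι F : Type*} [Fintype ι] [NormedAddCommGroup F]
    [InnerProductSpace ℝ F] {v : ι → F} (hv : ∀ i, ‖v i‖ = 1) {β : ℝ}
    (hβ : ∀ i j, i ≠ j → |⟪v i, v j⟫| ≤ β) (hcard : (Fintype.card ι - 1) * β < 1) :
    LinearIndependent ℝ v := by
  classical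
  rw [Fintype.linearIndependent_iff]
  by_contra! ⟨g, hg, i, hi⟩
  obtain ⟨i₀, -, hmax⟩ := exists_max_image univ (fun j => |g j|) ⟨i, mem_univ i⟩
  have hpos : 0 < |g i₀| := (abs_pos.2 hi).trans_le (hmax i (mem_univ i))
  -- Gershgorin: read the relation `∑ g j • v j = 0` in the direction of the largest `|g i₀|`
  have hgi₀ : g i₀ = -∑ j ∈ univ.erase i₀, g j * ⟪v i₀, v j⟫ := by
    have h0 : ⟪v i₀, ∑ j, g j • v j⟫ = 0 := by rw [hg, inner_zero_right]
    rw [inner_sum, ← add_sum_erase _ _ (mem_univ i₀)] at h0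
    simp only [real_inner_smul_right, real_inner_self_eq_norm_sq, hv, one_pow, mul_one] at h0
    linarith
  have hle : |g i₀| ≤ (Fintype.card ι - 1) * β * |g i₀| := calc
    |g i₀| = |∑ j ∈ univ.erase i₀, g j * ⟪v i₀, v j⟫| := by rw [hgi₀, abs_neg]
    _ ≤ ∑ j ∈ univ.erase i₀, |g j * ⟪v i₀, v j⟫| := abs_sum_le_sum_abs _ _
    _ ≤ ∑ j ∈ univ.erase i₀, |g i₀| * β := sum_le_sum fun j hj => by
      rw [abs_mul]
      exact mul_le_mul (hmax j (mem_univ j)) (hβ _ _ (ne_of_mem_erase hj).symm)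
        (abs_nonneg _) (abs_nonneg _)
    _ = (Fintype.card ι - 1) * β * |g i₀| := by
      rw [sum_const, card_erase_of_mem (mem_univ _), card_univ, nsmul_eq_mul,
        Nat.cast_pred (Fintype.card_pos_iff.2 ⟨i⟩)]
      ring
  nlinarith

section Coherence

variable {n : ℕ}

lemma coh_nonneg (X : Set (E n)) : 0 ≤ coh X := by
  apply Real.sSup_nonneg
  rintro r ⟨x, -, y, -, -, rfl⟩
  exact abs_nonneg _

lemma coh_le_of_forall {X : Set (E n)} {a : ℝ} (ha : 0 ≤ a)
    (h : ∀ x ∈ X, ∀ y ∈ X, x ≠ y → |⟪x, y⟫| ≤ a) : coh X ≤ a := by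
  apply Real.sSup_le _ ha
  rintro r ⟨x, hx, y, hy, hxy, rfl⟩
  exact h x hx y hy hxy

lemma abs_inner_le_one_of_isUnitSet {X : Set (E n)} (hX : IsUnitSet X) {x y : E n}
    (hx : x ∈ X) (hy : y ∈ X) : |⟪x, y⟫| ≤ 1 := by
  simpa [hX x hx, hX y hy] using abs_real_inner_le_norm x y

lemma abs_inner_le_coh {X : Set (E n)} (hX : IsUnitSet X) {x y : E n}
    (hx : x ∈ X) (hy : y ∈ X) (hxy : x ≠ y) : |⟪x, y⟫| ≤ coh X := by
  refine le_csSup ⟨1, ?_⟩ ⟨x, hx, y, hy, hxy, rfl⟩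
  rintro r ⟨a, ha, b, hb, -, rfl⟩
  exact abs_inner_le_one_of_isUnitSet hX ha hb

lemma coh_le_one {X : Set (E n)} (hX : IsUnitSet X) : coh X ≤ 1 :=
  coh_le_of_forall zero_le_one fun _ hx _ hy _ => abs_inner_le_one_of_isUnitSet hX hx hy

lemma inv_le_coh {m : ℕ} (hmn : n < m) {X : Set (E n)} (hX : IsUnitSet X) (hfin : X.Finite)
    (hcard : X.ncard = m) : (m : ℝ)⁻¹ ≤ coh X := by
  have := hfin.fintype
  have hcardX : Fintype.card X = m := by
    rw [← Nat.card_eq_fintype_card, Nat.card_coe_set_eq, hcard]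
  by_contra! hlt
  have hm : (0 : ℝ) < m := by exact_mod_cast (show 0 < m by omega)
  have hind : LinearIndependent ℝ ((↑) : X → E n) := by
    refine linearIndependent_of_abs_inner_le (fun x => hX x x.2)
      (fun x y hxy => abs_inner_le_coh hX x.2 y.2 (Subtype.coe_injective.ne hxy)) ?_
    rw [hcardX]
    nlinarith [coh_nonneg X, mul_inv_cancel₀ hm.ne']
  have := hind.fintype_card_le_finrank
  rw [finrank_euclideanSpace_fin, hcardX] at this
  omega

end Coherence

lemma abs_sqrt_mul_sqrt_mul_add_mul_le {p β c s t : ℝ} (hp : |p| ≤ β) (hcβ : 4 * c ≤ β)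
    (hs₀ : 0 ≤ s) (hs₁ : s ≤ 1) (ht : 0 ≤ t) (hts : t ≤ c * s) :
    |√(1 - s ^ 2) * √(1 - t ^ 2) * p + s * t| ≤ β - c * s ^ 2 := by
  have hA : √(1 - s ^ 2) ≤ 1 - s ^ 2 / 2 := Real.sqrt_le_iff.2 ⟨by nlinarith, by nlinarith⟩
  have hB : √(1 - t ^ 2) ≤ 1 := Real.sqrt_le_one.2 (by nlinarith)
  calc |√(1 - s ^ 2) * √(1 - t ^ 2) * p + s * t|
      ≤ √(1 - s ^ 2) * √(1 - t ^ 2) * |p| + s * t := by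
        refine (abs_add_le _ _).trans ?_
        rw [abs_mul _ p, abs_of_nonneg (by positivity : 0 ≤ √(1 - s ^ 2) * √(1 - t ^ 2)),
          abs_of_nonneg (mul_nonneg hs₀ ht)]
    _ ≤ (1 - s ^ 2 / 2) * 1 * β + s * (c * s) := by gcongr <;> nlinarith
    _ ≤ β - c * s ^ 2 := by nlinarith

noncomputable def snocE {n : ℕ} (v : E n) (t : ℝ) : E (n + 1) :=
  WithLp.toLp 2 (Fin.snoc v.ofLp t)

lemma inner_snocE {n : ℕ} (v w : E n) (s t : ℝ) :
    ⟪snocE v s, snocE w t⟫ = ⟪v, w⟫ + s * t := by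
  simp [snocE, PiLp.inner_apply, Fin.sum_univ_castSucc, mul_comm]

lemma norm_snocE_eq_one {n : ℕ} {v : E n} {t : ℝ} (h : ‖v‖ ^ 2 + t ^ 2 = 1) :
    ‖snocE v t‖ = 1 := by
  rw [← pow_eq_one_iff_of_nonneg (norm_nonneg _) two_ne_zero, ← real_inner_self_eq_norm_sq,
    inner_snocE, real_inner_self_eq_norm_sq, ← h, sq t]

lemma exists_lift_abs_inner_le_sub_pow {n : ℕ} {ι : Type*} [Fintype ι] {x : ι → E n}
    (hx : ∀ i, ‖x i‖ = 1) {β c : ℝ} (hc₀ : 0 < c) (hc₁ : c ≤ 1) (hcβ : 4 * c ≤ β)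
    (hxβ : ∀ i j, i ≠ j → |⟪x i, x j⟫| ≤ β) :
    ∃ y : Option ι → E (n + 1), (∀ i, ‖y i‖ = 1) ∧
      ∀ i j, i ≠ j → |⟪y i, y j⟫| ≤ β - c ^ (2 * Fintype.card ι + 1) := by
  set δ := c ^ (2 * Fintype.card ι + 1)
  let r := Fintype.equivFin ι
  let u : ι → ℝ := fun i => c ^ ((r i : ℕ) + 1)
  let y : Option ι → E (n + 1) := fun o =>
    o.elim (snocE 0 1) fun i => snocE (√(1 - u i ^ 2) • x i) (u i)
  have hu₀ (i : ι) : 0 ≤ u i := by positivity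
  have huc (i : ι) : u i ≤ c := pow_le_of_le_one hc₀.le hc₁ (by omega)
  have hu₁ (i : ι) : u i ≤ 1 := (huc i).trans hc₁
  have hδc : δ ≤ c := pow_le_of_le_one hc₀.le hc₁ (by omega)
  have hδu (i : ι) : δ ≤ c * u i ^ 2 := by
    rw [← pow_mul, ← pow_succ']
    exact pow_le_pow_of_le_one hc₀.le hc₁ (by have := (r i).2; omega)
  have hpair (i j : ι) (hij : r i < r j) : |⟪y (some i), y (some j)⟫| ≤ β - δ := by
    have huij : u j ≤ c * u i := by
      rw [← pow_succ']
      exact pow_le_pow_of_le_one hc₀.le hc₁ (by simp only [Fin.lt_def] at hij; omega)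
    simp only [y, Option.elim_some, inner_snocE, real_inner_smul_left, real_inner_smul_right,
      ← mul_assoc]
    calc _ = |√(1 - u i ^ 2) * √(1 - u j ^ 2) * ⟪x i, x j⟫ + u i * u j| := by ring_nf
      _ ≤ β - c * u i ^ 2 := abs_sqrt_mul_sqrt_mul_add_mul_le
          (hxβ i j fun h => hij.ne (congrArg r h)) hcβ (hu₀ i) (hu₁ i) (hu₀ j) huij
      _ ≤ β - δ := by linarith [hδu i]
  have hnew (i : ι) : |⟪y none, y (some i)⟫| ≤ β - δ := by
    simp only [y, Option.elim_none, Option.elim_some, inner_snocE, inner_zero_left, zero_add,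
      one_mul, abs_of_nonneg (hu₀ i)]
    linarith [huc i]
  refine ⟨y, ?_, ?_⟩
  · rintro (_ | i)
    · exact norm_snocE_eq_one (by simp)
    · refine norm_snocE_eq_one ?_
      rw [norm_smul, mul_pow, hx i, Real.norm_eq_abs, sq_abs,
        Real.sq_sqrt (by nlinarith [hu₀ i, hu₁ i])]
      ring
  · rintro (_ | i) (_ | j) hij
    · exact absurd rfl hij
    · exact hnew j
    · rw [real_inner_comm]; exact hnew i
    · have hij' : r i ≠ r j := r.injective.ne fun h => hij (h ▸ rfl)
      rcases hij'.lt_or_gt with h | h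
      · exact hpair i j h
      · rw [real_inner_comm]; exact hpair j i h

lemma sphere_infinite_of_two_le {n : ℕ} (hn : 2 ≤ n) : (Metric.sphere (0 : E n) 1).Infinite := by
  refine (isConnected_sphere ?_ 0 zero_le_one).isPreconnected.infinite_of_nontrivial ?_
  · rw [← Module.finrank_eq_rank, finrank_euclideanSpace_fin]; exact_mod_cast hn
  · set x : E n := EuclideanSpace.single ⟨0, by omega⟩ 1
    have hx : ‖x‖ = 1 := by simp [x]
    refine ⟨x, by simpa using hx, -x, by simpa using hx, fun h => ?_⟩
    have := congrArg (· ⟨0, by omega⟩) h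
    norm_num [x] at this

section GrassAngle

variable {m n : ℕ}

lemma grassAngle_le_coh {X : Set (E n)} (hX : IsUnitSet X) (hfin : X.Finite)
    (hcard : X.ncard = m) : grassAngle m n ≤ coh X :=
  csInf_le ⟨0, by rintro _ ⟨Y, -, -, -, rfl⟩; exact coh_nonneg Y⟩ ⟨X, hX, hfin, hcard, rfl⟩

lemma le_grassAngle {a : ℝ} (hne : ∃ X : Set (E n), IsUnitSet X ∧ X.Finite ∧ X.ncard = m)
    (h : ∀ X : Set (E n), IsUnitSet X → X.Finite → X.ncard = m → a ≤ coh X) :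
    a ≤ grassAngle m n := by
  obtain ⟨X, hX, hfin, hcard⟩ := hne
  refine le_csInf ⟨coh X, X, hX, hfin, hcard, rfl⟩ ?_
  rintro _ ⟨Y, hY, hfin, hcard, rfl⟩
  exact h Y hY hfin hcard

lemma grassAngle_card_le_of_abs_inner_le {ι : Type*} [Fintype ι] {v : ι → E n}
    (hv : ∀ i, ‖v i‖ = 1) {a : ℝ} (ha₀ : 0 ≤ a) (ha₁ : a < 1)
    (hva : ∀ i j, i ≠ j → |⟪v i, v j⟫| ≤ a) :
    grassAngle (Fintype.card ι) n ≤ a := by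
  have hinj : Function.Injective v := fun i j hij => by
    by_contra hne
    have := hva i j hne
    rw [hij, real_inner_self_eq_norm_sq, hv, one_pow, abs_one] at this
    linarith
  have hunit : IsUnitSet (Set.range v) := by rintro _ ⟨i, rfl⟩; exact hv i
  refine (grassAngle_le_coh hunit (Set.finite_range v) ?_).trans ?_
  · rw [← Set.image_univ, Set.ncard_image_of_injective _ hinj, Set.ncard_univ,
      Nat.card_eq_fintype_card]
  · refine coh_le_of_forall ha₀ ?_
    rintro _ ⟨i, rfl⟩ _ ⟨j, rfl⟩ hij
    exact hva i j fun h => hij (h ▸ rfl)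

lemma exists_isUnitSet_ncard_eq (m : ℕ) (hn : 2 ≤ n) :
    ∃ X : Set (E n), IsUnitSet X ∧ X.Finite ∧ X.ncard = m := by
  obtain ⟨X, hXS, hfin, hcard⟩ := (sphere_infinite_of_two_le hn).exists_subset_ncard_eq m
  exact ⟨X, fun x hx => by simpa using hXS hx, hfin, hcard⟩

lemma grassAngle_succ_le_coh_sub (hmn : n < m) {X : Set (E n)} (hX : IsUnitSet X)
    (hfin : X.Finite) (hcard : X.ncard = m) :
    grassAngle (m + 1) (n + 1) ≤ coh X - (4 * m : ℝ)⁻¹ ^ (2 * m + 1) ∧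
      grassAngle m (n + 1) ≤ coh X - (4 * m : ℝ)⁻¹ ^ (2 * m + 1) := by
  have := hfin.fintype
  have hcardX : Fintype.card X = m := by
    rw [← Nat.card_eq_fintype_card, Nat.card_coe_set_eq, hcard]
  set c : ℝ := (4 * m)⁻¹
  have hm : (1 : ℝ) ≤ m := by exact_mod_cast (show 1 ≤ m by omega)
  have hc₀ : 0 < c := by positivity
  have hc₁ : c ≤ 1 := inv_le_one_of_one_le₀ (by linarith)
  have hcβ : 4 * c ≤ coh X := by
    rw [show 4 * c = (m : ℝ)⁻¹ by simp only [c]; field_simp]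
    exact inv_le_coh hmn hX hfin hcard
  obtain ⟨y, hy, hyβ⟩ := exists_lift_abs_inner_le_sub_pow (x := ((↑) : X → E n))
    (fun x => hX x x.2) hc₀ hc₁ hcβ
    fun x x' h => abs_inner_le_coh hX x.2 x'.2 (Subtype.coe_injective.ne h)
  rw [hcardX] at hyβ
  have hδ₀ : 0 < c ^ (2 * m + 1) := by positivity
  have hδc : c ^ (2 * m + 1) ≤ c := pow_le_of_le_one hc₀.le hc₁ (by omega)
  have ha₀ : 0 ≤ coh X - c ^ (2 * m + 1) := by linarith
  have ha₁ : coh X - c ^ (2 * m + 1) < 1 := by linarith [coh_le_one hX]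
  constructor
  · simpa [hcardX] using grassAngle_card_le_of_abs_inner_le hy ha₀ ha₁ hyβ
  · simpa [hcardX] using grassAngle_card_le_of_abs_inner_le (fun i => hy (some i)) ha₀ ha₁
      fun i j h => hyβ _ _ (Option.some_injective _ |>.ne h)

end GrassAngle

theorem grassAngle_strict_mono_dim {m n : ℕ} (hn : 2 ≤ n) (hmn : n < m) :
    grassAngle (m + 1) (n + 1) < grassAngle m n ∧
    grassAngle m (n + 1) < grassAngle m n := by
  set δ : ℝ := (4 * m : ℝ)⁻¹ ^ (2 * m + 1)
  have hδ : 0 < δ := pow_pos (inv_pos.2 (by norm_cast; omega)) _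
  have hne := exists_isUnitSet_ncard_eq m hn
  have h₁ : grassAngle (m + 1) (n + 1) + δ ≤ grassAngle m n := le_grassAngle hne
    fun X hX hfin hcard => by linarith [(grassAngle_succ_le_coh_sub hmn hX hfin hcard).1]
  have h₂ : grassAngle m (n + 1) + δ ≤ grassAngle m n := le_grassAngle hne
    fun X hX hfin hcard => by linarith [(grassAngle_succ_le_coh_sub hmn hX hfin hcard).2]
  constructor <;> linarith
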